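/- Let H2 be a closed subspace of a real Hilbert space H, let P1 be the orthogonal projection of H onto H2^⊥, and let Q be a bounded idempotent operator on H (Q² = Q) with range Q = H2. Then P1 + Q is invertible in the algebra of bounded operators, with inverse 2 − P1 − Q; that is, (2 − P1 − Q)(P1 + Q) = I = (P1 + Q)(2 − P1 − Q). -/

import Mathlib

open scoped RealInnerProductSpace

noncomputable section

variable {H : Type*} [NormedAddCommGroup H] [InnerProductSpace ℝ H] [CompleteSpace H]

/-- The orthogonal projection onto a closed subspace, viewed as a map `H → H`. -/
def projL (S : Submodule ℝ H) [CompleteSpace S] : H →L[ℝ] H :=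
  S.subtypeL.comp S.orthogonalProjectionOnto

/-!
With `P := 1 - P1` the orthogonal projection onto `H2`, the idempotents `P` and `Q` have the
same range, so `P * Q = Q` and `Q * P = P`. Hence `N := P - Q` squares to zero, and
`P1 + Q = 1 - N` has the inverse `1 + N = 2 - P1 - Q`.
-/

theorem sub_sq_eq_zero_of_mul_eq_right {R : Type*} [Ring R] {e f : R}
    (hef : e * f = f) (hfe : f * e = e) : (e - f) ^ 2 = 0 := by
  have he : e * e = e := by nth_rw 2 [← hfe]; rw [← mul_assoc, hef, hfe]
  have hf : f * f = f := by nth_rw 2 [← hef]; rw [← mul_assoc, hfe, hef]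
  rw [sq, sub_mul, mul_sub, mul_sub, he, hf, hef, hfe]
  abel

theorem one_add_mul_one_sub_of_sq_eq_zero {R : Type*} [Ring R] {n : R} (hn : n ^ 2 = 0) :
    (1 + n) * (1 - n) = 1 ∧ (1 - n) * (1 + n) = 1 := by
  have h₁ : (1 + n) * (1 - n) = 1 - n ^ 2 := by noncomm_ring
  have h₂ : (1 - n) * (1 + n) = 1 - n ^ 2 := by noncomm_ring
  simp only [h₁, h₂, hn, sub_zero, and_self]

theorem ContinuousLinearMap.IsIdempotentElem.mul_eq_right_of_range_le
    {R M : Type*} [Semiring R] [TopologicalSpace M] [AddCommMonoid M] [Module R M]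
    {p q : M →L[R] M} (hq : IsIdempotentElem q) (h : p.range ≤ q.range) : q * p = p :=
  ContinuousLinearMap.coe_inj.mp <|
    (LinearMap.IsIdempotentElem.comp_eq_right_iff
      (ContinuousLinearMap.IsIdempotentElem.toLinearMap hq) p.toLinearMap).mpr h

/-- If `H2` is a closed subspace of a real Hilbert space `H`, `P1` is the
orthogonal projection onto `H2ᗮ`, and `Q` is a bounded idempotent with range `H2`, then
`P1 + Q` is invertible with inverse `2 − P1 − Q`. -/
theorem proj_add_oblique_invertible
    (H2 : Submodule ℝ H) [CompleteSpace H2]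
    (Q : H →L[ℝ] H)
    (hQidem : Q * Q = Q) (hQrange : Set.range Q = (H2 : Set H)) :
    (2 - projL H2ᗮ - Q) * (projL H2ᗮ + Q) = 1 ∧
    (projL H2ᗮ + Q) * (2 - projL H2ᗮ - Q) = 1 := by
  set P := H2.starProjection with hP
  have hP1 : projL H2ᗮ = 1 - P := H2.starProjection_orthogonal'
  have hrange : Q.range = H2 := SetLike.coe_injective hQrange
  have hPQ : P * Q = Q :=
    ContinuousLinearMap.IsIdempotentElem.mul_eq_right_of_range_le
      H2.isIdempotentElem_starProjection
      (by rw [hrange, hP, H2.range_starProjection])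
  have hQP : Q * P = P :=
    ContinuousLinearMap.IsIdempotentElem.mul_eq_right_of_range_le hQidem
      (by rw [hrange, hP, H2.range_starProjection])
  have hinv := one_add_mul_one_sub_of_sq_eq_zero (sub_sq_eq_zero_of_mul_eq_right hPQ hQP)
  have hleft : 2 - projL H2ᗮ - Q = 1 + (P - Q) := by rw [hP1, ← one_add_one_eq_two]; abel
  have hright : projL H2ᗮ + Q = 1 - (P - Q) := by rw [hP1]; abel
  rw [hleft, hright]
  exact hinv
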